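/- arXiv:0908.1227 — 2 statements merged into one kernel-verified Lean document; each statement's English description precedes it below -/
import Mathlib

section
/- Let λ > 0, χ > 0, and let Ω ⊂ ℝⁿ be a bounded domain with B_R ⊂ Ω for some R > 0. Let 0 ≤ u₀ ≤ a in Ω for some constant 0 < a < 1, and let 0 ≤ u < 1 be a solution of (P_λ) on Ω×(0,T) with sup_{0≤t<T} ∫_Ω dz/(1−u(z,t)) < ∞. Set A(t) = (1 + χ∫_Ω dz/(1−u(z,t)))^{−2}, and let 0 < δ₁ ≤ inf_{0≤t<T} A(t). If λ > 2n/(δ₁R²), then T ≤ (1/(λδ₁))·(1 − 2n/(λδ₁R²))^{−1}. -/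
open MeasureTheory Metric Set Filter Topology

/-- The Laplacian of a function on Euclidean space, written as the sum of
second partial derivatives along the coordinate directions. -/
noncomputable def lap {n : ℕ} (f : EuclideanSpace ℝ (Fin n) → ℝ)
    (x : EuclideanSpace ℝ (Fin n)) : ℝ :=
  ∑ i : Fin n, fderiv ℝ (fun y => fderiv ℝ f y (EuclideanSpace.single i 1)) x
    (EuclideanSpace.single i 1)

/-- The nonlocal MEMS nonlinearity `λ / ((1-u)² (1 + χ ∫_Ω dy/(1-u))²)`. -/
noncomputable def nonlocalRHS {n : ℕ} (lam chi : ℝ) (Ω : Set (EuclideanSpace ℝ (Fin n)))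
    (w : EuclideanSpace ℝ (Fin n) → ℝ) (x : EuclideanSpace ℝ (Fin n)) : ℝ :=
  lam / ((1 - w x) ^ 2 * (1 + chi * ∫ y in Ω, 1 / (1 - w y)) ^ 2)

/-- `u` is a solution of the nonlocal parabolic MEMS problem (P_λ) on `Ω × (0,T)`
with initial value `u₀`. -/
structure IsSolutionP {n : ℕ} (lam chi : ℝ) (Ω : Set (EuclideanSpace ℝ (Fin n)))
    (u₀ : EuclideanSpace ℝ (Fin n) → ℝ) (u : EuclideanSpace ℝ (Fin n) → ℝ → ℝ)
    (T : ℝ) : Prop where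
  cont : ContinuousOn (fun p : EuclideanSpace ℝ (Fin n) × ℝ => u p.1 p.2)
    (closure Ω ×ˢ Ioo 0 T)
  space_reg : ∀ t ∈ Ioo (0:ℝ) T, ContDiffOn ℝ 2 (fun y => u y t) Ω
  lt_one : ∀ x ∈ closure Ω, ∀ t ∈ Ioo (0:ℝ) T, u x t < 1
  sup_lt_one : ∀ T' ∈ Ioo (0:ℝ) T, ∃ M, M < 1 ∧ ∀ x ∈ closure Ω, ∀ t ∈ Ioc (0:ℝ) T', u x t ≤ M
  pde : ∀ x ∈ Ω, ∀ t ∈ Ioo (0:ℝ) T,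
    HasDerivAt (fun s => u x s)
      (lap (fun y => u y t) x + nonlocalRHS lam chi Ω (fun y => u y t) x) t
  bdry : ∀ x ∈ frontier Ω, ∀ t ∈ Ioo (0:ℝ) T, u x t = 0
  init : Tendsto (fun t => ∫ x in Ω, |u x t - u₀ x|) (𝓝[>] (0:ℝ)) (𝓝 0)

/-- A bounded domain of class C²: an open connected set which near every boundary
point is the sublevel set of a C² defining function with nonvanishing gradient. -/
def IsC2Domain {n : ℕ} (Ω : Set (EuclideanSpace ℝ (Fin n))) : Prop :=
  IsOpen Ω ∧ IsConnected Ω ∧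
    ∀ x ∈ frontier Ω, ∃ (V : Set (EuclideanSpace ℝ (Fin n)))
      (ρ : EuclideanSpace ℝ (Fin n) → ℝ),
      x ∈ V ∧ IsOpen V ∧ ContDiff ℝ 2 ρ ∧ (∀ y ∈ V, fderiv ℝ ρ y ≠ 0) ∧
      Ω ∩ V = {y ∈ V | ρ y < 0} ∧ frontier Ω ∩ V = {y ∈ V | ρ y = 0}

/-- The boundary collar `Ω_δ = {x ∈ Ω : dist(x, ∂Ω) < δ}`. -/
def collar {n : ℕ} (Ω : Set (EuclideanSpace ℝ (Fin n))) (δ : ℝ) :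
    Set (EuclideanSpace ℝ (Fin n)) :=
  {x ∈ Ω | infDist x (frontier Ω) < δ}

/-- `ν` is a unit outward normal vector to `Ω` at the boundary point `x`. -/
def IsOutwardNormal {n : ℕ} (Ω : Set (EuclideanSpace ℝ (Fin n)))
    (x ν : EuclideanSpace ℝ (Fin n)) : Prop :=
  ‖ν‖ = 1 ∧ ∃ ε > 0, ∀ s : ℝ, 0 < s → s < ε →
    x + s • ν ∉ closure Ω ∧ x - s • ν ∈ Ω

/-- `u` quenches (touches down) at time `T`:  `sup_Ω u(·,t) < 1` for `0 < t < T`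
and `sup_Ω u(·,t) → 1` as `t ↗ T`. -/
def QuenchesAt {n : ℕ} (Ω : Set (EuclideanSpace ℝ (Fin n)))
    (u : EuclideanSpace ℝ (Fin n) → ℝ → ℝ) (T : ℝ) : Prop :=
  (∀ t ∈ Ioo (0:ℝ) T, sSup ((fun x => u x t) '' Ω) < 1) ∧
  Tendsto (fun t => sSup ((fun x => u x t) '' Ω)) (𝓝[<] T) (𝓝 1)

/-- `x` is a quenching (touchdown) point of `u`. -/
def IsQuenchPoint {n : ℕ} (Ω : Set (EuclideanSpace ℝ (Fin n)))
    (u : EuclideanSpace ℝ (Fin n) → ℝ → ℝ) (T : ℝ)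
    (x : EuclideanSpace ℝ (Fin n)) : Prop :=
  x ∈ Ω ∧ ∃ (xk : ℕ → EuclideanSpace ℝ (Fin n)) (tk : ℕ → ℝ),
    (∀ k, xk k ∈ Ω ∧ tk k ∈ Ioo (0:ℝ) T) ∧
    Tendsto xk atTop (𝓝 x) ∧ Tendsto (fun k => u (xk k) (tk k)) atTop (𝓝 1)

/-- `C` is a cone with vertex `y` (star-shaped about `y`). -/
def IsConeWithVertex {n : ℕ} (y : EuclideanSpace ℝ (Fin n))
    (C : Set (EuclideanSpace ℝ (Fin n))) : Prop :=
  y ∈ C ∧ ∀ z ∈ C, segment ℝ y z ⊆ C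


/-!
Put `α = λ δ₁` and `β = 2n/R²`. Since the nonlocal factor is at least `δ₁` and `(1 - u)⁻² ≥ 1`,
`u` satisfies `∂ₜu ≥ Δu + α` on `B_R`. The barrier `σ(t - t₀) (1 - |x|²/R²)`, where
`σ' = α - βσ`, `σ 0 = 0`, satisfies the reverse inequality (because `Δ|x|² = 2n`) and vanishes on
the parabolic boundary of `B_R × (t₀, t₁)`, so by the maximum principle it stays below `u`.
At `x = 0` this gives `σ(s) ≤ u(0, t₀ + s) < 1` for all `s < T`, while `e^x ≥ 1 + x` gives
`σ(1/(α - β)) ≥ 1`; hence `T ≤ 1/(α - β)`.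
-/

theorem IsLocalMin.nonneg_of_hasDerivAt_second {h h' : ℝ → ℝ} {a c : ℝ} (hmin : IsLocalMin h a)
    (hh : ∀ᶠ s in 𝓝 a, HasDerivAt h (h' s) s) (hh' : HasDerivAt h' c a) : 0 ≤ c := by
  by_contra! hc
  have hzero : h' a = 0 := hmin.hasDerivAt_eq_zero hh.self_of_nhds
  have hneg : ∀ᶠ s in 𝓝[>] a, h' s < 0 := by
    have hslope := (hasDerivAt_iff_tendsto_slope.1 hh').mono_left (nhdsGT_le_nhdsNE a)
    filter_upwards [hslope.eventually_lt_const hc, self_mem_nhdsWithin] with s hs hsa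
    rw [slope_def_field, hzero, sub_zero] at hs
    simpa using (div_lt_iff₀ (sub_pos.2 hsa)).1 hs
  obtain ⟨b, hab : a < b, hb⟩ := mem_nhdsGT_iff_exists_Ioo_subset.1
    (((hh.and hmin).filter_mono nhdsWithin_le_nhds).and hneg)
  obtain ⟨m, ham, hmb⟩ := exists_between hab
  have hcont : ContinuousOn h (Icc a m) := by
    intro s hs
    rcases hs.1.eq_or_lt with rfl | has
    · exact hh.self_of_nhds.continuousAt.continuousWithinAt
    · exact (hb ⟨has, hs.2.trans_lt hmb⟩).1.1.continuousAt.continuousWithinAt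
  obtain ⟨ξ, hξ, hξeq⟩ := exists_hasDerivAt_eq_slope h h' ham hcont
    fun s hs => (hb ⟨hs.1, hs.2.trans hmb⟩).1.1
  have : 0 ≤ h' ξ := hξeq ▸ div_nonneg (sub_nonneg.2 (hb ⟨ham, hmb⟩).1.2) (sub_pos.2 ham).le
  exact (hb ⟨hξ.1, hξ.2.trans hmb⟩).2.not_ge this

theorem IsLocalMin.neg_le_fderiv_fderiv_of_add_norm_sq {E : Type*} [NormedAddCommGroup E]
    [InnerProductSpace ℝ E] {g : E → ℝ} {x : E} {c : ℝ} (hg : ContDiffAt ℝ 2 g x)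
    (hmin : IsLocalMin (fun y => g y + c * ‖y‖ ^ 2) x) (v : E) :
    -(2 * c * ‖v‖ ^ 2) ≤ fderiv ℝ (fun y => fderiv ℝ g y v) x v := by
  set ℓ : ℝ → E := fun s => x + s • v
  have hℓ : ∀ s, HasDerivAt ℓ v s := fun s => by
    simpa [ℓ] using ((hasDerivAt_id s).smul_const v).const_add x
  have hℓ0 : ℓ 0 = x := by simp [ℓ]
  have hdiff : ∀ᶠ s in 𝓝 0, DifferentiableAt ℝ g (ℓ s) := by
    refine (hℓ 0).continuousAt.tendsto.eventually ?_
    rw [hℓ0]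
    exact (hg.eventually (by simp)).mono fun y hy => hy.differentiableAt (by norm_num)
  have hd2 : DifferentiableAt ℝ (fun y => fderiv ℝ g y v) (ℓ 0) := by
    rw [hℓ0]
    exact ((hg.fderiv_right (m := 1) (by norm_num)).differentiableAt (by norm_num)).clm_apply
      (differentiableAt_const v)
  have hmin' : IsLocalMin ((fun y => g y + c * ‖y‖ ^ 2) ∘ ℓ) 0 :=
    (by rwa [hℓ0] : IsLocalMin _ (ℓ 0)).comp_continuous (hℓ 0).continuousAt
  have key := hmin'.nonneg_of_hasDerivAt_second
    (h' := fun s => fderiv ℝ g (ℓ s) v + c * (2 * inner ℝ (ℓ s) v))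
    (hdiff.mono fun s hs => (hs.hasFDerivAt.comp_hasDerivAt s (hℓ s)).add
      (((hℓ s).norm_sq).const_mul c))
    ((hd2.hasFDerivAt.comp_hasDerivAt 0 (hℓ 0)).add
      ((((hℓ 0).inner ℝ (hasDerivAt_const 0 v)).const_mul 2).const_mul c))
  rw [hℓ0] at key
  simp only [inner_zero_right, zero_add, real_inner_self_eq_norm_sq] at key
  linarith

theorem neg_le_lap_of_isLocalMin_add_norm_sq {n : ℕ} {g : EuclideanSpace ℝ (Fin n) → ℝ}
    {x : EuclideanSpace ℝ (Fin n)} {c : ℝ} (hg : ContDiffAt ℝ 2 g x)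
    (hmin : IsLocalMin (fun y => g y + c * ‖y‖ ^ 2) x) : -(2 * n * c) ≤ lap g x := by
  have hi : ∀ i : Fin n, -(2 * c) ≤ fderiv ℝ (fun y => fderiv ℝ g y (EuclideanSpace.single i 1)) x
      (EuclideanSpace.single i 1) := fun i => by
    simpa using hmin.neg_le_fderiv_fderiv_of_add_norm_sq hg (EuclideanSpace.single i 1)
  calc -(2 * n * c) = ∑ _i : Fin n, -(2 * c) := by simp; ring
    _ ≤ lap g x := Finset.sum_le_sum fun i _ => hi i

noncomputable def relaxProfile (α β s : ℝ) : ℝ :=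
  α / β * (1 - Real.exp (-β * s))

theorem relaxProfile_zero (α β : ℝ) : relaxProfile α β 0 = 0 := by
  simp [relaxProfile]

theorem continuous_relaxProfile (α β : ℝ) : Continuous (relaxProfile α β) := by
  unfold relaxProfile
  fun_prop

theorem hasDerivAt_relaxProfile (α : ℝ) {β : ℝ} (hβ : β ≠ 0) (s : ℝ) :
    HasDerivAt (relaxProfile α β) (α - β * relaxProfile α β s) s := by
  have hexp : HasDerivAt (fun r => Real.exp (-β * r)) (Real.exp (-β * s) * (-β * 1)) s :=
    (Real.hasDerivAt_exp _).comp s ((hasDerivAt_id s).const_mul (-β))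
  refine ((hexp.const_sub 1).const_mul (α / β)).congr_deriv ?_
  simp only [relaxProfile]
  field_simp
  ring

theorem mul_relaxProfile_le {α : ℝ} (hα : 0 ≤ α) {β : ℝ} (hβ : β ≠ 0) (s : ℝ) :
    β * relaxProfile α β s ≤ α := by
  have : β * relaxProfile α β s = α - α * Real.exp (-β * s) := by
    simp only [relaxProfile]
    field_simp
  rw [this]
  linarith [mul_nonneg hα (Real.exp_pos (-β * s)).le]

theorem one_le_relaxProfile {α β : ℝ} (hβ : 0 < β) (hβα : β < α) :
    1 ≤ relaxProfile α β (1 / (α - β)) := by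
  have hα : 0 < α := hβ.trans hβα
  have hγ : 0 < α - β := sub_pos.2 hβα
  have hexp : α / (α - β) ≤ Real.exp (β / (α - β)) := by
    have := Real.add_one_le_exp (β / (α - β))
    rwa [div_add_one hγ.ne', add_sub_cancel] at this
  have hexp' : Real.exp (-β * (1 / (α - β))) ≤ (α - β) / α := by
    rw [show -β * (1 / (α - β)) = -(β / (α - β)) by ring, Real.exp_neg, ← inv_div α]
    exact inv_anti₀ (by positivity) hexp
  calc (1 : ℝ) = α / β * (1 - (α - β) / α) := by field_simp; ring
    _ ≤ relaxProfile α β (1 / (α - β)) := by unfold relaxProfile; gcongr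

theorem nonpos_of_hasDerivAt_of_isMinOn_Icc {ψ : ℝ → ℝ} {a b d : ℝ} (hab : a < b)
    (hmin : IsMinOn ψ (Icc a b) b) (hψ : HasDerivAt ψ d b) : d ≤ 0 := by
  have hcone : a - b ∈ posTangentConeAt (Icc a b) b :=
    sub_mem_posTangentConeAt_of_segment_subset (by rw [segment_symm, segment_eq_Icc hab.le])
  refine nonpos_of_mul_nonneg_right ?_ (sub_neg.2 hab)
  simpa using hmin.localize.hasFDerivWithinAt_nonneg hψ.hasFDerivAt.hasFDerivWithinAt hcone

def IsHeatSupersolutionOn {n : ℕ} (α : ℝ) (U : Set (EuclideanSpace ℝ (Fin n))) (I : Set ℝ)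
    (u : EuclideanSpace ℝ (Fin n) → ℝ → ℝ) : Prop :=
  ∀ x ∈ U, ∀ t ∈ I, ContDiffAt ℝ 2 (fun y => u y t) x ∧
    ∃ d, HasDerivAt (fun s => u x s) d t ∧ lap (fun y => u y t) x + α ≤ d

theorem IsHeatSupersolutionOn.mono {n : ℕ} {α : ℝ} {U : Set (EuclideanSpace ℝ (Fin n))}
    {I J : Set ℝ} {u : EuclideanSpace ℝ (Fin n) → ℝ → ℝ} (h : IsHeatSupersolutionOn α U I u)
    (hJI : J ⊆ I) : IsHeatSupersolutionOn α U J u :=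
  fun x hx t ht => h x hx t (hJI ht)

noncomputable def barrier {n : ℕ} (α R t₀ : ℝ) (x : EuclideanSpace ℝ (Fin n)) (t : ℝ) : ℝ :=
  relaxProfile α (2 * n / R ^ 2) (t - t₀) * (1 - ‖x‖ ^ 2 / R ^ 2)

section Barrier

variable {n : ℕ} {u : EuclideanSpace ℝ (Fin n) → ℝ → ℝ} {α R t₀ t₁ : ℝ}

theorem barrier_left (x : EuclideanSpace ℝ (Fin n)) : barrier α R t₀ x t₀ = 0 := by
  simp [barrier, relaxProfile_zero]

theorem barrier_of_norm_eq {x : EuclideanSpace ℝ (Fin n)} (hR : R ≠ 0) (hx : ‖x‖ = R) (t : ℝ) :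
    barrier α R t₀ x t = 0 := by
  simp [barrier, hx, hR]

theorem continuous_barrier :
    Continuous fun p : EuclideanSpace ℝ (Fin n) × ℝ => barrier α R t₀ p.1 p.2 := by
  unfold barrier
  have := continuous_relaxProfile α (2 * n / R ^ 2)
  fun_prop

theorem IsHeatSupersolutionOn.not_isMinOn_sub_barrier
    (hsuper : IsHeatSupersolutionOn α (ball 0 R) (Ioc t₀ t₁) u) (hn : 1 ≤ n) (hR : 0 < R)
    (hα : 0 ≤ α) {ε : ℝ} (hε : 0 < ε) {x : EuclideanSpace ℝ (Fin n)} {t : ℝ}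
    (hx : x ∈ ball 0 R) (ht : t ∈ Ioc t₀ t₁) :
    ¬ IsMinOn (fun p => u p.1 p.2 - barrier α R t₀ p.1 p.2 + ε * (p.2 - t₀))
      (closedBall 0 R ×ˢ Icc t₀ t₁) (x, t) := by
  intro hmin
  obtain ⟨hreg, d, hd, hdlap⟩ := hsuper x hx t ht
  set β : ℝ := 2 * n / R ^ 2
  have hβ : β ≠ 0 := by positivity
  set σ := relaxProfile α β (t - t₀)
  have hbarrier : ∀ y, barrier α R t₀ y t = σ - σ / R ^ 2 * ‖y‖ ^ 2 := fun y => by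
    simp only [barrier]; ring
  have hspace : IsLocalMin (fun y => u y t + σ / R ^ 2 * ‖y‖ ^ 2) x := by
    filter_upwards [isOpen_ball.mem_nhds hx] with y hy
    have := isMinOn_iff.1 hmin (y, t) (mk_mem_prod (ball_subset_closedBall hy) ⟨ht.1.le, ht.2⟩)
    simp only [hbarrier] at this
    linarith
  have hlap := neg_le_lap_of_isLocalMin_add_norm_sq hreg hspace
  have htime : d - (α - β * σ) * (1 - ‖x‖ ^ 2 / R ^ 2) + ε ≤ 0 := by
    refine nonpos_of_hasDerivAt_of_isMinOn_Icc
      (ψ := fun s => u x s - barrier α R t₀ x s + ε * (s - t₀)) ht.1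
      (fun s hs => hmin (mk_mem_prod (ball_subset_closedBall hx) ⟨hs.1, hs.2.trans ht.2⟩)) ?_
    have hshift : HasDerivAt (fun s => s - t₀) 1 t := (hasDerivAt_id t).sub_const t₀
    have hσ : HasDerivAt (fun s => relaxProfile α β (s - t₀)) (α - β * σ) t := by
      exact ((hasDerivAt_relaxProfile α hβ (t - t₀)).comp t hshift).congr_deriv (mul_one _)
    exact (hd.sub (hσ.mul_const (1 - ‖x‖ ^ 2 / R ^ 2))).add
      ((hshift.const_mul ε).congr_deriv (mul_one ε))
  have hφ : (α - β * σ) * (1 - ‖x‖ ^ 2 / R ^ 2) ≤ α - β * σ :=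
    mul_le_of_le_one_right (sub_nonneg.2 (mul_relaxProfile_le hα hβ _))
      (sub_le_self _ (by positivity))
  have hβσ : β * σ = 2 * n * (σ / R ^ 2) := by ring
  -- `d ≥ Δu + α ≥ α - βσ = σ'`, so the time derivative of the perturbed difference is `≥ ε`.
  linarith

theorem IsHeatSupersolutionOn.barrier_le_add
    (hsuper : IsHeatSupersolutionOn α (ball 0 R) (Ioc t₀ t₁) u) (hn : 1 ≤ n) (hR : 0 < R)
    (hα : 0 ≤ α) (h01 : t₀ ≤ t₁)
    (hcont : ContinuousOn (fun p : EuclideanSpace ℝ (Fin n) × ℝ => u p.1 p.2)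
      (closedBall 0 R ×ˢ Icc t₀ t₁))
    (hnonneg : ∀ x ∈ closedBall 0 R, ∀ t ∈ Icc t₀ t₁, 0 ≤ u x t) {ε : ℝ} (hε : 0 < ε) :
    ∀ x ∈ closedBall 0 R, ∀ t ∈ Icc t₀ t₁, barrier α R t₀ x t ≤ u x t + ε * (t - t₀) := by
  obtain ⟨⟨y, s⟩, hys, hmin⟩ :=
    (isCompact_closedBall 0 R).prod (isCompact_Icc (a := t₀) (b := t₁)) |>.exists_isMinOn
    (f := fun p => u p.1 p.2 - barrier α R t₀ p.1 p.2 + ε * (p.2 - t₀))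
    ⟨(0, t₀), mem_closedBall_self hR.le, left_mem_Icc.2 h01⟩
    ((hcont.sub continuous_barrier.continuousOn).add
      (continuous_const.mul (continuous_snd.sub continuous_const)).continuousOn)
  have hy : y ∈ closedBall 0 R := hys.1
  have hs : s ∈ Icc t₀ t₁ := hys.2
  suffices 0 ≤ u y s - barrier α R t₀ y s + ε * (s - t₀) by
    intro x hx t ht
    have := isMinOn_iff.1 hmin (x, t) ⟨hx, ht⟩
    dsimp only at this
    linarith
  have hus := hnonneg y hy s hs
  rcases (mem_closedBall_zero_iff.1 hy).lt_or_eq with hy | hy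
  · rcases hs.1.eq_or_lt with hs₀ | hs₀
    · subst hs₀
      simpa [barrier_left] using hus
    · exact absurd hmin
        (hsuper.not_isMinOn_sub_barrier hn hR hα hε (mem_ball_zero_iff.2 hy) ⟨hs₀, hs.2⟩)
  · rw [barrier_of_norm_eq hR.ne' hy]
    nlinarith [hs.1]

theorem IsHeatSupersolutionOn.barrier_le
    (hsuper : IsHeatSupersolutionOn α (ball 0 R) (Ioc t₀ t₁) u) (hn : 1 ≤ n) (hR : 0 < R)
    (hα : 0 ≤ α) (h01 : t₀ ≤ t₁)
    (hcont : ContinuousOn (fun p : EuclideanSpace ℝ (Fin n) × ℝ => u p.1 p.2)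
      (closedBall 0 R ×ˢ Icc t₀ t₁))
    (hnonneg : ∀ x ∈ closedBall 0 R, ∀ t ∈ Icc t₀ t₁, 0 ≤ u x t) :
    ∀ x ∈ closedBall 0 R, ∀ t ∈ Icc t₀ t₁, barrier α R t₀ x t ≤ u x t := by
  intro x hx t ht
  have hlim : Tendsto (fun ε => u x t + ε * (t - t₀)) (𝓝[>] 0) (𝓝 (u x t)) := by
    have : Continuous fun ε : ℝ => u x t + ε * (t - t₀) := by fun_prop
    simpa using this.continuousAt.tendsto.mono_left (nhdsWithin_le_nhds (a := 0))
  exact ge_of_tendsto hlim <| eventually_nhdsWithin_of_forall fun ε hε =>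
    hsuper.barrier_le_add hn hR hα h01 hcont hnonneg hε x hx t ht

end Barrier

theorem mul_le_nonlocalRHS {n : ℕ} {lam chi δ₁ : ℝ} {Ω : Set (EuclideanSpace ℝ (Fin n))}
    {w : EuclideanSpace ℝ (Fin n) → ℝ} {x : EuclideanSpace ℝ (Fin n)} (hlam : 0 ≤ lam)
    (hw₀ : 0 ≤ w x) (hw₁ : w x < 1)
    (hδ₁ : δ₁ ≤ ((1 + chi * ∫ y in Ω, 1 / (1 - w y)) ^ 2)⁻¹) :
    lam * δ₁ ≤ nonlocalRHS lam chi Ω w x := by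
  set q := (1 + chi * ∫ y in Ω, 1 / (1 - w y)) ^ 2
  have hp : 1 ≤ ((1 - w x) ^ 2)⁻¹ :=
    one_le_inv₀ (by nlinarith) |>.2 (by nlinarith)
  calc lam * δ₁ ≤ lam * q⁻¹ := by gcongr
    _ ≤ lam * (((1 - w x) ^ 2)⁻¹ * q⁻¹) := by gcongr; exact le_mul_of_one_le_left (by positivity) hp
    _ = nonlocalRHS lam chi Ω w x := by rw [nonlocalRHS, div_eq_mul_inv, mul_inv]

theorem IsSolutionP.isHeatSupersolutionOn {n : ℕ} {lam chi δ₁ R T : ℝ}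
    {Ω : Set (EuclideanSpace ℝ (Fin n))} {u₀ : EuclideanSpace ℝ (Fin n) → ℝ}
    {u : EuclideanSpace ℝ (Fin n) → ℝ → ℝ} (hsol : IsSolutionP lam chi Ω u₀ u T)
    (hlam : 0 ≤ lam) (hball : ball 0 R ⊆ Ω)
    (hnonneg : ∀ x ∈ closure Ω, ∀ t ∈ Ioo 0 T, 0 ≤ u x t)
    (hinf : ∀ t ∈ Ioo 0 T, δ₁ ≤ ((1 + chi * ∫ z in Ω, 1 / (1 - u z t)) ^ 2)⁻¹) :
    IsHeatSupersolutionOn (lam * δ₁) (ball 0 R) (Ioo 0 T) u := by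
  intro x hx t ht
  have hxΩ : x ∈ closure Ω := subset_closure (hball hx)
  refine ⟨(hsol.space_reg t ht).contDiffAt (mem_of_superset (isOpen_ball.mem_nhds hx) hball),
    _, hsol.pde x (hball hx) t ht, ?_⟩
  have := mul_le_nonlocalRHS hlam (hnonneg x hxΩ t ht) (hsol.lt_one x hxΩ t ht) (hinf t ht)
  linarith

theorem IsSolutionP.relaxProfile_lt_one {n : ℕ} (hn : 1 ≤ n)
    {Ω : Set (EuclideanSpace ℝ (Fin n))} {R lam chi δ₁ T : ℝ} (hR : 0 < R) (hlam : 0 ≤ lam)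
    (hδ₁ : 0 ≤ δ₁) (hball : ball 0 R ⊆ Ω) {u₀ : EuclideanSpace ℝ (Fin n) → ℝ}
    {u : EuclideanSpace ℝ (Fin n) → ℝ → ℝ} (hsol : IsSolutionP lam chi Ω u₀ u T)
    (hnonneg : ∀ x ∈ closure Ω, ∀ t ∈ Ioo 0 T, 0 ≤ u x t)
    (hinf : ∀ t ∈ Ioo 0 T, δ₁ ≤ ((1 + chi * ∫ z in Ω, 1 / (1 - u z t)) ^ 2)⁻¹)
    {s : ℝ} (hs : s ∈ Ioo 0 T) :
    relaxProfile (lam * δ₁) (2 * n / R ^ 2) s < 1 := by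
  obtain ⟨hs₀, hsT⟩ := hs
  obtain ⟨t₀, ht₀, ht₀T⟩ : ∃ t₀, 0 < t₀ ∧ t₀ + s < T := ⟨(T - s) / 2, by linarith, by linarith⟩
  have hI : Icc t₀ (t₀ + s) ⊆ Ioo 0 T := Icc_subset_Ioo (by linarith) (by linarith)
  have hcb : closedBall (0 : EuclideanSpace ℝ (Fin n)) R ⊆ closure Ω := by
    rw [← closure_ball 0 hR.ne']
    exact closure_mono hball
  have h0 : (0 : EuclideanSpace ℝ (Fin n)) ∈ closedBall 0 R := mem_closedBall_self hR.le
  have hsuper := (hsol.isHeatSupersolutionOn hlam hball hnonneg hinf).mono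
    (Ioc_subset_Icc_self.trans hI)
  have hle := hsuper.barrier_le hn hR (by positivity) (by linarith)
    (hsol.cont.mono (prod_mono hcb hI)) (fun x hx t ht => hnonneg x (hcb hx) t (hI ht))
    0 h0 (t₀ + s) ⟨by linarith, le_rfl⟩
  simp only [barrier, add_sub_cancel_left, norm_zero] at hle
  simpa using hle.trans_lt (hsol.lt_one 0 (hcb h0) _ (hI ⟨by linarith, le_rfl⟩))

theorem statement6_general {n : ℕ} (hn : 1 ≤ n) (Ω : Set (EuclideanSpace ℝ (Fin n)))
    (R lam chi δ₁ T : ℝ) (hR : 0 < R) (hlam : 0 < lam)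
    (hball : ball (0 : EuclideanSpace ℝ (Fin n)) R ⊆ Ω)
    (u₀ : EuclideanSpace ℝ (Fin n) → ℝ)
    (u : EuclideanSpace ℝ (Fin n) → ℝ → ℝ)
    (hsol : IsSolutionP lam chi Ω u₀ u T)
    (hnonneg : ∀ x ∈ closure Ω, ∀ t ∈ Ioo (0:ℝ) T, 0 ≤ u x t)
    (hδ₁ : 0 < δ₁)
    (hinf : ∀ t ∈ Ioo (0:ℝ) T,
      δ₁ ≤ ((1 + chi * ∫ z in Ω, 1 / (1 - u z t)) ^ 2)⁻¹)
    (hlam' : 2 * (n : ℝ) / (δ₁ * R ^ 2) < lam) :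
    T ≤ 1 / (lam * δ₁) * (1 - 2 * (n : ℝ) / (lam * δ₁ * R ^ 2))⁻¹ := by
  have hβ : 0 < 2 * (n : ℝ) / R ^ 2 := by positivity
  have hβα : 2 * (n : ℝ) / R ^ 2 < lam * δ₁ := by
    rw [div_lt_iff₀ (by positivity)] at hlam' ⊢
    linarith
  have hT : T ≤ 1 / (lam * δ₁ - 2 * n / R ^ 2) := by
    by_contra! hT
    exact (one_le_relaxProfile hβ hβα).not_gt <| hsol.relaxProfile_lt_one hn hR hlam.le hδ₁.le
      hball hnonneg hinf ⟨one_div_pos.2 (sub_pos.2 hβα), hT⟩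
  have hden : lam * δ₁ * R ^ 2 - 2 * n ≠ 0 := by
    rw [div_lt_iff₀ (by positivity)] at hβα
    linarith
  convert hT using 1
  field_simp

/-- Lemma 7: upper bound on the existence time.  If `B_R ⊂ Ω`,
`0 ≤ u < 1` solves (P_λ) on `Ω × (0,T)` with the nonlocal integral uniformly bounded,
`A(t) = (1 + χ∫_Ω dz/(1-u(z,t)))⁻²`, `0 < δ₁ ≤ inf A(t)` and `λ > 2n/(δ₁R²)`,
then `T ≤ (1/(λδ₁))(1 - 2n/(λδ₁R²))⁻¹`. -/
theorem statement6 {n : ℕ} (hn : 1 ≤ n) (Ω : Set (EuclideanSpace ℝ (Fin n)))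
    (hopen : IsOpen Ω) (hbdd : Bornology.IsBounded Ω)
    (R lam chi a δ₁ T : ℝ) (hR : 0 < R) (hlam : 0 < lam) (hchi : 0 < chi)
    (ha : 0 < a) (ha1 : a < 1) (hT : 0 < T)
    (hball : ball (0 : EuclideanSpace ℝ (Fin n)) R ⊆ Ω)
    (u₀ : EuclideanSpace ℝ (Fin n) → ℝ)
    (hu₀ : ∀ x ∈ Ω, 0 ≤ u₀ x ∧ u₀ x ≤ a)
    (u : EuclideanSpace ℝ (Fin n) → ℝ → ℝ)
    (hsol : IsSolutionP lam chi Ω u₀ u T)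
    (hnonneg : ∀ x ∈ closure Ω, ∀ t ∈ Ioo (0:ℝ) T, 0 ≤ u x t)
    (hsup : ∃ M : ℝ, ∀ t ∈ Ioo (0:ℝ) T, (∫ z in Ω, 1 / (1 - u z t)) ≤ M)
    (hδ₁ : 0 < δ₁)
    (hinf : ∀ t ∈ Ioo (0:ℝ) T,
      δ₁ ≤ ((1 + chi * ∫ z in Ω, 1 / (1 - u z t)) ^ 2)⁻¹)
    (hlam' : 2 * (n : ℝ) / (δ₁ * R ^ 2) < lam) :
    T ≤ 1 / (lam * δ₁) * (1 - 2 * (n : ℝ) / (lam * δ₁ * R ^ 2))⁻¹ :=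
  statement6_general hn Ω R lam chi δ₁ T hR hlam hball u₀ u hsol hnonneg hδ₁ hinf hlam'
end

section
/- Let n ≥ 1, R > 0, λ > 0, δ₁ > 0 be constants with λδ₁ > 2n/R², and set c₀ = 1 − 2n/(λδ₁R²). Define ψ(x,t) = 1 − λδ₁c₀ t (1 − |x|²/R²) for x ∈ ℝⁿ and t ≥ 0. Then ψ > 0 on cl(B_R)×[0, 1/(λδ₁c₀)), and ψ satisfies ∂ψ/∂t − Δψ + λδ₁ψ^{−2} ≥ 0 at every point of B_R×(0, 1/(λδ₁c₀)); i.e., ψ is a supersolution of ψ_t = Δψ − λδ₁ψ^{−2} there. -/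
/-
Write `A = λδ₁c₀` and `K(x) = 1 - |x|²/R²`, so that `ψ = 1 - A t K` with `0 ≤ K ≤ 1` on the closed
ball. For `0 ≤ t < 1/A` one has `0 ≤ At < 1`, hence `0 < ψ ≤ 1`. The function `ψ(·, t)` is a
quadratic in `|x|`, so `Δψ = 2n · At/R² = At(λδ₁ - A)` by the choice of `c₀`, while `ψ_t = -AK`.
Bounding `AK ≤ A`, `At(λδ₁ - A) ≤ λδ₁ - A` and `λδ₁ψ⁻² ≥ λδ₁` gives
`ψ_t - Δψ + λδ₁ψ⁻² ≥ -A - (λδ₁ - A) + λδ₁ = 0`.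
-/

open MeasureTheory Metric Set Filter Topology

section QuadraticNorm

variable {E : Type*} [NormedAddCommGroup E] [InnerProductSpace ℝ E]

theorem fderiv_const_add_mul_norm_sq_apply (a b : ℝ) (y v : E) :
    fderiv ℝ (fun y => a + b * ‖y‖ ^ 2) y v = 2 * b * inner ℝ v y := by
  rw [(((hasStrictFDerivAt_norm_sq y).hasFDerivAt.const_mul b).const_add a).fderiv]
  simp [real_inner_comm]
  ring

theorem fderiv_fderiv_const_add_mul_norm_sq_apply (a b : ℝ) (x v : E) :
    fderiv ℝ (fun y => fderiv ℝ (fun y => a + b * ‖y‖ ^ 2) y v) x v = 2 * b * ‖v‖ ^ 2 := by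
  have h : HasFDerivAt (fun y => 2 * b * inner ℝ v y) ((2 * b) • innerSL ℝ v) x :=
    (innerSL ℝ v).hasFDerivAt.const_mul (2 * b)
  simp_rw [fderiv_const_add_mul_norm_sq_apply, h.fderiv]
  simp

end QuadraticNorm

theorem lap_const_add_mul_norm_sq {n : ℕ} (a b : ℝ) (x : EuclideanSpace ℝ (Fin n)) :
    lap (fun y => a + b * ‖y‖ ^ 2) x = 2 * n * b := by
  simp only [lap, fderiv_fderiv_const_add_mul_norm_sq_apply, PiLp.norm_single, norm_one]
  simp
  ring

theorem one_sub_sq_div_sq_mem_Icc {r R : ℝ} (hr : 0 ≤ r) (hrR : r ≤ R) :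
    1 - r ^ 2 / R ^ 2 ∈ Icc (0 : ℝ) 1 :=
  ⟨sub_nonneg.2 (div_le_one_of_le₀ (pow_le_pow_left₀ hr hrR 2) (sq_nonneg R)),
    sub_le_self _ (by positivity)⟩

theorem one_sub_mul_mem_Ioc {s k : ℝ} (hs0 : 0 ≤ s) (hs1 : s < 1) (hk : k ∈ Icc (0 : ℝ) 1) :
    1 - s * k ∈ Ioc (0 : ℝ) 1 :=
  ⟨sub_pos.2 ((mul_le_of_le_one_right hs0 hk.2).trans_lt hs1), sub_le_self _ (mul_nonneg hs0 hk.1)⟩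

theorem mul_lt_one_of_lt_one_div {A t : ℝ} (ht : 0 ≤ t) (htA : t < 1 / A) :
    0 < A ∧ A * t < 1 := by
  have hA : 0 < A := one_div_pos.1 (ht.trans_lt htA)
  exact ⟨hA, by rwa [lt_div_iff₀ hA, mul_comm] at htA⟩

theorem statement7_general {n : ℕ} (R lam δ₁ c₀ : ℝ)
    (hlam : 0 < lam) (hδ₁ : 0 < δ₁)
    (hc₀ : c₀ = 1 - 2 * (n : ℝ) / (lam * δ₁ * R ^ 2))
    (ψ : EuclideanSpace ℝ (Fin n) → ℝ → ℝ)
    (hψ : ψ = fun x t => 1 - lam * δ₁ * c₀ * t * (1 - ‖x‖ ^ 2 / R ^ 2)) :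
    (∀ x : EuclideanSpace ℝ (Fin n), ‖x‖ ≤ R →
        ∀ t : ℝ, 0 ≤ t → t < 1 / (lam * δ₁ * c₀) → 0 < ψ x t) ∧
    (∀ x : EuclideanSpace ℝ (Fin n), ‖x‖ < R →
        ∀ t : ℝ, 0 < t → t < 1 / (lam * δ₁ * c₀) →
          0 ≤ deriv (fun s => ψ x s) t - lap (fun y => ψ y t) x
              + lam * δ₁ / (ψ x t) ^ 2) := by
  subst hψ
  set L := lam * δ₁
  set A := L * c₀ with hA
  have hcoef : 2 * (n : ℝ) / R ^ 2 = L - A := by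
    rw [hA, hc₀, mul_sub, mul_one, mul_div_assoc', mul_div_mul_left _ _ (by positivity)]
    ring
  have hψ_mem : ∀ x : EuclideanSpace ℝ (Fin n), ‖x‖ ≤ R → ∀ t, 0 ≤ t → t < 1 / A →
      1 - A * t * (1 - ‖x‖ ^ 2 / R ^ 2) ∈ Ioc (0 : ℝ) 1 := fun x hx t ht htA =>
    have hAt := mul_lt_one_of_lt_one_div ht htA
    one_sub_mul_mem_Ioc (mul_nonneg hAt.1.le ht) hAt.2 (one_sub_sq_div_sq_mem_Icc (norm_nonneg x) hx)
  refine ⟨fun x hx t ht htA => (hψ_mem x hx t ht htA).1, fun x hx t ht htA => ?_⟩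
  obtain ⟨hA0, hAt⟩ := mul_lt_one_of_lt_one_div ht.le htA
  obtain ⟨hψ0, hψ1⟩ := hψ_mem x hx.le t ht.le htA
  have hlap : lap (fun y => 1 - A * t * (1 - ‖y‖ ^ 2 / R ^ 2)) x = A * t * (L - A) := by
    have hquad : (fun y : EuclideanSpace ℝ (Fin n) => 1 - A * t * (1 - ‖y‖ ^ 2 / R ^ 2))
        = fun y => (1 - A * t) + A * t / R ^ 2 * ‖y‖ ^ 2 := by
      funext y; ring
    rw [hquad, lap_const_add_mul_norm_sq, ← hcoef]; ring
  set K := 1 - ‖x‖ ^ 2 / R ^ 2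
  have hderiv : deriv (fun s => 1 - A * s * K) t = -(A * K) := by simp
  rw [hderiv, hlap]
  have hAK : A * K ≤ A :=
    mul_le_of_le_one_right hA0.le (one_sub_sq_div_sq_mem_Icc (norm_nonneg x) hx.le).2
  have hLA : A * t * (L - A) ≤ L - A := mul_le_of_le_one_left (hcoef ▸ by positivity) hAt.le
  have hdiv : L ≤ L / (1 - A * t * K) ^ 2 :=
    le_div_self (by positivity) (by positivity) (pow_le_one₀ hψ0.le hψ1)
  linarith

/-- the explicit supersolution in the proof of Lemma 7.
With `c₀ = 1 - 2n/(λδ₁R²) > 0` and `ψ(x,t) = 1 - λδ₁c₀t(1-|x|²/R²)`, the function `ψ`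
is positive on `cl(B_R) × [0, 1/(λδ₁c₀))` and satisfies
`ψ_t - Δψ + λδ₁ψ⁻² ≥ 0` on `B_R × (0, 1/(λδ₁c₀))`. -/
theorem statement7 {n : ℕ} (hn : 1 ≤ n) (R lam δ₁ c₀ : ℝ)
    (hR : 0 < R) (hlam : 0 < lam) (hδ₁ : 0 < δ₁)
    (hbig : 2 * (n : ℝ) / R ^ 2 < lam * δ₁)
    (hc₀ : c₀ = 1 - 2 * (n : ℝ) / (lam * δ₁ * R ^ 2))
    (ψ : EuclideanSpace ℝ (Fin n) → ℝ → ℝ)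
    (hψ : ψ = fun x t => 1 - lam * δ₁ * c₀ * t * (1 - ‖x‖ ^ 2 / R ^ 2)) :
    (∀ x : EuclideanSpace ℝ (Fin n), ‖x‖ ≤ R →
        ∀ t : ℝ, 0 ≤ t → t < 1 / (lam * δ₁ * c₀) → 0 < ψ x t) ∧
    (∀ x : EuclideanSpace ℝ (Fin n), ‖x‖ < R →
        ∀ t : ℝ, 0 < t → t < 1 / (lam * δ₁ * c₀) →
          0 ≤ deriv (fun s => ψ x s) t - lap (fun y => ψ y t) x
              + lam * δ₁ / (ψ x t) ^ 2) :=
  statement7_general R lam δ₁ c₀ hlam hδ₁ hc₀ ψ hψ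
end
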